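/- arXiv:2102.05844 — 2 statements merged into one kernel-verified Lean document; each statement's English description precedes it below -/
import Mathlib

section
/- If the midpoint of p_i and p_j lies at height y (i.e., (p_i.2 + p_j.2)/2 = y), then the backward pair distance B(y) = ⨅ x, max(dist((x,y), p_i), dist((x,y), p_j)) equals dist(p_i, p_j)/2, attained at x equal to the x-coordinate of the midpoint. -/
/-! The triangle inequality gives `dist p q ≤ dist z p + dist z q ≤ 2 * max (dist z p) (dist z q)`
for every `z`, and the midpoint of `p` and `q`, which lies on the horizontal line at mid-height,
is at distance exactly `dist p q / 2` from both. -/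

noncomputable def pt (x y : ℝ) : EuclideanSpace ℝ (Fin 2) := WithLp.toLp 2 ![x, y]

theorem half_dist_le_max_dist {X : Type*} [PseudoMetricSpace X] (p q z : X) :
    dist p q / 2 ≤ max (dist z p) (dist z q) := by
  have := dist_triangle_left p q z
  have := le_max_left (dist z p) (dist z q)
  have := le_max_right (dist z p) (dist z q)
  linarith

section Midpoint

variable {E : Type*} [NormedAddCommGroup E] [NormedSpace ℝ E]

theorem max_dist_midpoint (p q : E) :
    max (dist (midpoint ℝ p q) p) (dist (midpoint ℝ p q) q) = dist p q / 2 := by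
  simp only [dist_midpoint_left, dist_midpoint_right, max_self, Real.norm_ofNat]
  ring

theorem iInf_max_dist_eq_half_dist {ι : Type*} (f : ι → E) (p q : E) (i : ι)
    (hi : f i = midpoint ℝ p q) :
    ⨅ j, max (dist (f j) p) (dist (f j) q) = dist p q / 2 := by
  have : Nonempty ι := ⟨i⟩
  refine le_antisymm ?_ (le_ciInf fun j => half_dist_le_max_dist p q (f j))
  calc ⨅ j, max (dist (f j) p) (dist (f j) q)
      ≤ max (dist (f i) p) (dist (f i) q) :=
        ciInf_le ⟨0, Set.forall_mem_range.2 fun _ => le_max_of_le_left dist_nonneg⟩ i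
    _ = dist p q / 2 := hi ▸ max_dist_midpoint p q

end Midpoint

theorem pt_eq_midpoint (p q : EuclideanSpace ℝ (Fin 2)) :
    pt ((p 0 + q 0) / 2) ((p 1 + q 1) / 2) = midpoint ℝ p q := by
  ext i
  fin_cases i <;> simp [pt, midpoint_eq_smul_add] <;> ring

theorem backward_pair_at_midheight (pi pj : EuclideanSpace ℝ (Fin 2)) (y : ℝ)
    (h : (pi 1 + pj 1) / 2 = y) :
    (⨅ x : ℝ, max (dist (pt x y) pi) (dist (pt x y) pj)) = dist pi pj / 2 ∧
    max (dist (pt ((pi 0 + pj 0) / 2) y) pi) (dist (pt ((pi 0 + pj 0) / 2) y) pj) =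
      dist pi pj / 2 := by
  subst h
  have hmid := pt_eq_midpoint pi pj
  exact ⟨iInf_max_dist_eq_half_dist (fun x => pt x _) pi pj _ hmid,
    hmid ▸ max_dist_midpoint pi pj⟩
end

section
/- Let D₁, D₂, D₃ be three closed disks in ℝ² of equal radius d with centers c₁, c₂, c₃, all containing a common boundary point z (i.e., dist(z, cᵢ) = d for each i). If z is in the convex hull of c₁, c₂, c₃, then the intersection of the three open disks of radius d centered at c₁, c₂, c₃ is empty. -/
open RealInnerProductSpace

theorem three_disks_empty_intersection (c₁ c₂ c₃ z : EuclideanSpace ℝ (Fin 2)) (d : ℝ)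
    (hd : 0 < d) (h1 : dist z c₁ = d) (h2 : dist z c₂ = d) (h3 : dist z c₃ = d)
    (hz : z ∈ convexHull ℝ ({c₁, c₂, c₃} : Set (EuclideanSpace ℝ (Fin 2)))) :
    Metric.ball c₁ d ∩ Metric.ball c₂ d ∩ Metric.ball c₃ d = ∅ := by
  ext x
  simp only [Set.mem_inter_iff, Metric.mem_ball, Set.mem_empty_iff_false, iff_false, not_and]
  rintro ⟨hx1, hx2⟩ hx3
  have hxz : x ≠ z := by
    rintro rfl
    rw [h1] at hx1
    exact lt_irrefl d hx1
  have hpos : (0:ℝ) < ‖x - z‖ ^ 2 / 2 := by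
    have h0 : 0 < ‖x - z‖ := norm_sub_pos_iff.mpr hxz
    positivity
  have key : ∀ c : EuclideanSpace ℝ (Fin 2), dist x c < d → dist z c = d →
      ‖x - z‖ ^ 2 / 2 < ⟪x - z, c - z⟫ := by
    intro c hxc hzc
    have h : ‖x - c‖ < ‖z - c‖ := by
      rw [← dist_eq_norm, ← dist_eq_norm, hzc]; exact hxc
    have h' : ‖x - c‖ ^ 2 < ‖z - c‖ ^ 2 := by
      have := dist_nonneg (x := x) (y := c)
      rw [dist_eq_norm] at this
      nlinarith
    have e : x - c = (x - z) - (c - z) := by abel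
    rw [e, norm_sub_sq_real] at h'
    have ez : z - c = -(c - z) := by abel
    rw [ez, norm_neg] at h'
    nlinarith
  -- decompose convex hull membership
  rw [show ({c₁, c₂, c₃} : Set (EuclideanSpace ℝ (Fin 2))) = insert c₁ {c₂, c₃} from rfl,
      convexHull_insert ⟨c₂, Or.inl rfl⟩, convexHull_pair, mem_convexJoin] at hz
  obtain ⟨x', hx', y, hy, hzseg⟩ := hz
  rw [Set.mem_singleton_iff] at hx'
  rw [hx'] at hzseg
  obtain ⟨p, q, hp, hq, hpq, rfl⟩ := hy
  obtain ⟨a, b, ha, hb, hab, hzz⟩ := hzseg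
  have h1' : a + (b * p + b * q) = 1 := by
    have : b * (p + q) = b * 1 := by rw [hpq]
    nlinarith
  have hzero : a • (c₁ - z) + (b * p) • (c₂ - z) + (b * q) • (c₃ - z) = 0 := by
    calc a • (c₁ - z) + (b * p) • (c₂ - z) + (b * q) • (c₃ - z)
        = (a • c₁ + b • (p • c₂ + q • c₃)) - (a + (b * p + b * q)) • z := by module
      _ = z - (1:ℝ) • z := by rw [hzz, h1']
      _ = 0 := by module
  have hinner : a * ⟪x - z, c₁ - z⟫ + (b * p) * ⟪x - z, c₂ - z⟫
      + (b * q) * ⟪x - z, c₃ - z⟫ = 0 := by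
    have := congrArg (fun v => ⟪x - z, v⟫) hzero
    simp only [inner_add_right, real_inner_smul_right, inner_zero_right] at this
    exact this
  have k1 := key c₁ hx1 h1
  have k2 := key c₂ hx2 h2
  have k3 := key c₃ hx3 h3
  nlinarith [h1', hpos, hinner,
    mul_le_mul_of_nonneg_left k1.le ha,
    mul_le_mul_of_nonneg_left k2.le (mul_nonneg hb hp),
    mul_le_mul_of_nonneg_left k3.le (mul_nonneg hb hq)]
end
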